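/- Let μ₁, μ₂, c₁, c₂ ∈ ℝ, and set a = c₁ − μ₁, b = c₂ − μ₂. Then, as ρ → 0, the lower-quadrant probability P(ρ) = ∬_{x<c₁, y<c₂} f_ρ(x,y) dx dy satisfies P(ρ) − [ Φ(a)Φ(b) + φ(a)φ(b)·ρ + (1/2)·φ(a)a·φ(b)b·ρ² + (1/6)·φ(a)(a²−1)·φ(b)(b²−1)·ρ³ ] = O(ρ⁴); that is, the difference is big-O of ρ⁴ in a neighborhood of ρ = 0. -/

import Mathlib

/-!
With `a = c₁ - μ₁` and `b = c₂ - μ₂`, conditioning on the first coordinate gives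
`P(ρ) = ∫_{u < a} φ(u) Φ((b - ρu) / √(1 - ρ²)) du`. Differentiating under the integral sign, the
`ρ`-derivative of the integrand is an exact `u`-derivative, so `P'(ρ) = f_ρ(c₁, c₂)` (Plackett's
identity). The density satisfies `∂_ρ f_ρ = f_ρ S_ρ` for an explicit rational score `S_ρ`, so
`P''' = f_ρ (S_ρ² + ∂_ρ S_ρ)`; at `ρ = 0` the values `f_0 = φ(a)φ(b)`, `S_0 = ab` and
`∂_ρ S_0 = 1 - a² - b²` give the coefficients, and the mean value inequality bounds the remainder.
-/

open MeasureTheory Real Set Filter Asymptotics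

/-- Standard normal density. -/
noncomputable def stdPDF (x : ℝ) : ℝ := (Real.sqrt (2 * Real.pi))⁻¹ * Real.exp (-x ^ 2 / 2)

/-- Standard normal CDF. -/
noncomputable def stdCDF (x : ℝ) : ℝ := ∫ u in Set.Iio x, stdPDF u

/-- Bivariate normal density with means `μ₁ μ₂`, unit variances, correlation `ρ`. -/
noncomputable def bvnPDF (μ₁ μ₂ ρ x y : ℝ) : ℝ :=
  (2 * Real.pi * Real.sqrt (1 - ρ ^ 2))⁻¹ *
    Real.exp (-((x - μ₁) ^ 2 - 2 * ρ * (x - μ₁) * (y - μ₂) + (y - μ₂) ^ 2) / (2 * (1 - ρ ^ 2)))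

/-- `Q(ρ)`: probability both coordinates exceed `|z|` in absolute value. -/
noncomputable def quadProb (μ₁ μ₂ z ρ : ℝ) : ℝ :=
  ∫ p in {p : ℝ × ℝ | |z| < |p.1| ∧ |z| < |p.2|}, bvnPDF μ₁ μ₂ ρ p.1 p.2

/-- `Cov(ρ)`: covariance of the two-sided rejection indicators. -/
noncomputable def covInd (μ₁ μ₂ z ρ : ℝ) : ℝ :=
  quadProb μ₁ μ₂ z ρ -
    (stdCDF (z + μ₁) + stdCDF (z - μ₁)) * (stdCDF (z + μ₂) + stdCDF (z - μ₂))

open ProbabilityTheory Topology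

lemma isBigO_sub_pow_succ_of_hasDerivAt {E : Type*} [NormedAddCommGroup E] [NormedSpace ℝ E]
    {f f' : ℝ → E} {n : ℕ} (hf : ∀ᶠ x in 𝓝 0, HasDerivAt f (f' x) x)
    (hf' : f' =O[𝓝 0] fun x ↦ x ^ n) :
    (fun x ↦ f x - f 0) =O[𝓝 0] fun x ↦ x ^ (n + 1) := by
  obtain ⟨C, hC₀, hC⟩ := hf'.exists_nonneg
  obtain ⟨δ, hδ, hball⟩ := Metric.eventually_nhds_iff_ball.1 (hf.and hC.bound)
  refine IsBigO.of_bound C (Metric.eventually_nhds_iff_ball.2 ⟨δ, hδ, fun x hx ↦ ?_⟩)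
  have hsub : Metric.closedBall (0 : ℝ) ‖x‖ ⊆ Metric.ball 0 δ :=
    Metric.closedBall_subset_ball (by simpa using hx)
  have hmvt := (convex_closedBall (0 : ℝ) ‖x‖).norm_image_sub_le_of_norm_hasDerivWithin_le
    (C := C * ‖x‖ ^ n) (fun t ht ↦ (hball t (hsub ht)).1.hasDerivWithinAt)
    (fun t ht ↦ (hball t (hsub ht)).2.trans (by
      rw [norm_pow]
      gcongr
      simpa using ht))
    (Metric.mem_closedBall_self (norm_nonneg x))
    (show x ∈ Metric.closedBall (0 : ℝ) ‖x‖ by simp)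
  simpa [norm_pow, pow_succ, mul_assoc] using hmvt

lemma isBigO_sub_taylor_three {f f₁ f₂ f₃ : ℝ → ℝ}
    (h₀ : ∀ᶠ x in 𝓝 0, HasDerivAt f (f₁ x) x) (h₁ : ∀ᶠ x in 𝓝 0, HasDerivAt f₁ (f₂ x) x)
    (h₂ : ∀ᶠ x in 𝓝 0, HasDerivAt f₂ (f₃ x) x) (h₃ : DifferentiableAt ℝ f₃ 0) :
    (fun x ↦ f x - (f 0 + f₁ 0 * x + f₂ 0 / 2 * x ^ 2 + f₃ 0 / 6 * x ^ 3))
      =O[𝓝 0] fun x ↦ x ^ 4 := by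
  have e₃ : (fun x ↦ f₃ x - f₃ 0) =O[𝓝 0] fun x ↦ x ^ 1 := by
    simpa using h₃.isBigO_sub
  have e₂ : (fun x ↦ f₂ x - (f₂ 0 + f₃ 0 * x)) =O[𝓝 0] fun x ↦ x ^ 2 := by
    refine (isBigO_sub_pow_succ_of_hasDerivAt (f := fun x ↦ f₂ x - f₃ 0 * x)
      (h₂.mono fun x hx ↦
        (hx.sub ((hasDerivAt_id x).const_mul (f₃ 0))).congr_deriv (by rw [mul_one]))
      e₃).congr_left fun x ↦ by ring
  have e₁ : (fun x ↦ f₁ x - (f₁ 0 + f₂ 0 * x + f₃ 0 / 2 * x ^ 2)) =O[𝓝 0] fun x ↦ x ^ 3 := by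
    refine (isBigO_sub_pow_succ_of_hasDerivAt
      (f := fun x ↦ f₁ x - (f₂ 0 * x + f₃ 0 / 2 * x ^ 2))
      (h₁.mono fun x hx ↦ (hx.sub (((hasDerivAt_id x).const_mul (f₂ 0)).add
        ((hasDerivAt_pow 2 x).const_mul (f₃ 0 / 2)))).congr_deriv (by push_cast; ring))
      e₂).congr_left fun x ↦ by ring
  refine (isBigO_sub_pow_succ_of_hasDerivAt
    (f := fun x ↦ f x - (f₁ 0 * x + f₂ 0 / 2 * x ^ 2 + f₃ 0 / 6 * x ^ 3))
    (h₀.mono fun x hx ↦ (hx.sub ((((hasDerivAt_id x).const_mul (f₁ 0)).add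
      ((hasDerivAt_pow 2 x).const_mul (f₂ 0 / 2))).add
      ((hasDerivAt_pow 3 x).const_mul (f₃ 0 / 6)))).congr_deriv (by push_cast; ring))
    e₁).congr_left fun x ↦ by ring

lemma stdPDF_eq_gaussianPDFReal : stdPDF = gaussianPDFReal 0 1 := by
  ext x
  simp [stdPDF, gaussianPDFReal]

lemma stdPDF_pos (x : ℝ) : 0 < stdPDF x := by
  unfold stdPDF
  positivity

lemma stdPDF_le_one (x : ℝ) : stdPDF x ≤ 1 := by
  have h2π : 1 ≤ √(2 * π) := Real.one_le_sqrt.2 (by linarith [pi_gt_three])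
  calc stdPDF x ≤ (√(2 * π))⁻¹ * 1 := by
        unfold stdPDF
        gcongr
        exact exp_le_one_iff.2 (by nlinarith [sq_nonneg x])
    _ ≤ 1 := by simpa using inv_le_one_of_one_le₀ h2π

@[fun_prop]
lemma continuous_stdPDF : Continuous stdPDF := by
  unfold stdPDF
  fun_prop

lemma integrable_stdPDF : Integrable stdPDF := by
  rw [stdPDF_eq_gaussianPDFReal]
  exact integrable_gaussianPDFReal 0 1

lemma integral_stdPDF : ∫ x, stdPDF x = 1 := by
  rw [stdPDF_eq_gaussianPDFReal]
  exact integral_gaussianPDFReal_eq_one 0 one_ne_zero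

lemma integrable_mul_stdPDF : Integrable fun x ↦ x * stdPDF x := by
  refine ((integrable_mul_exp_neg_mul_sq (by norm_num : (0 : ℝ) < 1 / 2)).const_mul
    (√(2 * π))⁻¹).congr (ae_of_all _ fun x ↦ ?_)
  simp only [stdPDF]
  ring_nf

lemma hasDerivAt_stdPDF (x : ℝ) : HasDerivAt stdPDF (-x * stdPDF x) x :=
  ((((hasDerivAt_pow 2 x).fun_neg.div_const 2).exp).const_mul (√(2 * π))⁻¹).congr_deriv (by
    simp only [stdPDF]
    push_cast
    ring)

lemma tendsto_stdPDF_atBot : Tendsto stdPDF atBot (𝓝 0) := by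
  have h := ((tendsto_rpow_abs_mul_exp_neg_mul_sq_cocompact (by norm_num : (0 : ℝ) < 1 / 2) 0
    ).const_mul (√(2 * π))⁻¹).mono_left atBot_le_cocompact
  rw [mul_zero] at h
  refine h.congr fun x ↦ ?_
  simp only [stdPDF, rpow_zero, one_mul]
  ring_nf

lemma stdCDF_nonneg (x : ℝ) : 0 ≤ stdCDF x :=
  integral_nonneg fun u ↦ (stdPDF_pos u).le

lemma stdCDF_le_one (x : ℝ) : stdCDF x ≤ 1 :=
  integral_stdPDF ▸ setIntegral_le_integral integrable_stdPDF
    (ae_of_all _ fun u ↦ (stdPDF_pos u).le)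

lemma hasDerivAt_stdCDF (x : ℝ) : HasDerivAt stdCDF (stdPDF x) x := by
  have h : ∀ y, stdCDF y = stdCDF 0 + ∫ t in (0 : ℝ)..y, stdPDF t := fun y ↦ by
    simp only [stdCDF, ← integral_Iic_eq_integral_Iio]
    rw [← intervalIntegral.integral_Iic_sub_Iic integrable_stdPDF.integrableOn
      integrable_stdPDF.integrableOn]
    ring
  rw [funext h]
  exact (intervalIntegral.integral_hasDerivAt_right (continuous_stdPDF.intervalIntegrable 0 x)
    (continuous_stdPDF.stronglyMeasurableAtFilter _ _) continuous_stdPDF.continuousAt).const_add _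

@[fun_prop]
lemma continuous_stdCDF : Continuous stdCDF :=
  continuous_iff_continuousAt.2 fun x ↦ (hasDerivAt_stdCDF x).continuousAt

lemma one_sub_sq_pos {ρ : ℝ} (hρ : |ρ| < 1) : 0 < 1 - ρ ^ 2 :=
  sub_pos.2 ((sq_lt_one_iff_abs_lt_one ρ).2 hρ)

/-- `stdCDF (condArg b ρ u)` is the conditional probability of `Y < b` given `X = u`, for a
standard bivariate normal pair `(X, Y)` with correlation `ρ`. -/
noncomputable def condArg (b ρ u : ℝ) : ℝ := (b - ρ * u) / √(1 - ρ ^ 2)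

lemma condArg_sub (b μ ρ u : ℝ) : condArg (b - μ) ρ u = (b - (μ + ρ * u)) / √(1 - ρ ^ 2) := by
  rw [condArg, sub_sub]

lemma bvnPDF_eq_stdPDF_mul {ρ : ℝ} (hρ : |ρ| < 1) (μ₁ μ₂ x y : ℝ) :
    bvnPDF μ₁ μ₂ ρ x y =
      stdPDF (x - μ₁) * ((√(1 - ρ ^ 2))⁻¹ * stdPDF (condArg (y - μ₂) ρ (x - μ₁))) := by
  have hq := one_sub_sq_pos hρ
  have h2π : √(2 * π) * √(2 * π) = 2 * π := mul_self_sqrt (by positivity)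
  have hexp : -((x - μ₁) ^ 2 - 2 * ρ * (x - μ₁) * (y - μ₂) + (y - μ₂) ^ 2) / (2 * (1 - ρ ^ 2))
      = -(x - μ₁) ^ 2 / 2 + -condArg (y - μ₂) ρ (x - μ₁) ^ 2 / 2 := by
    rw [condArg, div_pow, sq_sqrt hq.le]
    field_simp
    ring
  have hconst : (2 * π * √(1 - ρ ^ 2))⁻¹ = (√(2 * π))⁻¹ * (√(2 * π))⁻¹ * (√(1 - ρ ^ 2))⁻¹ := by
    rw [← mul_inv, h2π, mul_inv]
  rw [bvnPDF, stdPDF, stdPDF, hexp, exp_add, hconst]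
  ring

lemma setIntegral_Iio_comp_affine {s : ℝ} (hs : 0 < s) (m c : ℝ) (g : ℝ → ℝ) :
    ∫ t in Iio ((c - m) / s), g (s * t + m) = s⁻¹ * ∫ y in Iio c, g y := by
  have himage : (fun t ↦ s * t + m) '' Iio ((c - m) / s) = Iio c := by
    rw [← image_image (· + m) (s * ·), image_mul_left_Iio hs, image_add_const_Iio,
      mul_div_cancel₀ _ hs.ne', sub_add_cancel]
  have h := integral_image_eq_integral_abs_deriv_smul (measurableSet_Iio (a := (c - m) / s))
    (fun t _ ↦ (((hasDerivAt_id' t).const_mul s).add_const m).hasDerivWithinAt)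
    (fun t₁ _ t₂ _ h ↦ mul_left_cancel₀ hs.ne' (add_right_cancel h)) g
  rw [himage] at h
  simp [h, abs_of_pos hs, integral_const_mul, hs.ne']

lemma integrable_bvnPDF {ρ : ℝ} (hρ : |ρ| < 1) (μ₁ μ₂ : ℝ) :
    Integrable fun p : ℝ × ℝ ↦ bvnPDF μ₁ μ₂ ρ p.1 p.2 := by
  have hs : 0 < √(1 - ρ ^ 2) := sqrt_pos.2 (one_sub_sq_pos hρ)
  have hslice (u : ℝ) : Integrable fun y ↦ stdPDF (condArg (y - μ₂) ρ u) := by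
    simpa only [condArg_sub] using (integrable_stdPDF.comp_div hs.ne').comp_sub_right (μ₂ + ρ * u)
  have hmass (u : ℝ) : ∫ y, stdPDF (condArg (y - μ₂) ρ u) = √(1 - ρ ^ 2) := by
    simp only [condArg_sub]
    rw [integral_sub_right_eq_self (fun y ↦ stdPDF (y / √(1 - ρ ^ 2))), Measure.integral_comp_div,
      integral_stdPDF, abs_of_pos hs, smul_eq_mul, mul_one]
  rw [Measure.volume_eq_prod, integrable_prod_iff (by unfold bvnPDF; fun_prop)]
  simp only [bvnPDF_eq_stdPDF_mul hρ]
  refine ⟨ae_of_all _ fun x ↦ ((hslice (x - μ₁)).const_mul _).const_mul _, ?_⟩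
  refine (integrable_stdPDF.comp_sub_right μ₁).congr (ae_of_all _ fun x ↦ ?_)
  simp only [norm_mul, Real.norm_of_nonneg (stdPDF_pos _).le, norm_inv,
    Real.norm_of_nonneg hs.le, integral_const_mul, hmass, inv_mul_cancel₀ hs.ne', mul_one]

noncomputable def lowerQuadrantProb (μ₁ μ₂ c₁ c₂ ρ : ℝ) : ℝ :=
  ∫ p in {p : ℝ × ℝ | p.1 < c₁ ∧ p.2 < c₂}, bvnPDF μ₁ μ₂ ρ p.1 p.2

lemma setIntegral_Iio_stdPDF_condArg {ρ : ℝ} (hρ : |ρ| < 1) (μ c u : ℝ) :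
    ∫ y in Iio c, (√(1 - ρ ^ 2))⁻¹ * stdPDF (condArg (y - μ) ρ u)
      = stdCDF (condArg (c - μ) ρ u) := by
  have hs : 0 < √(1 - ρ ^ 2) := sqrt_pos.2 (one_sub_sq_pos hρ)
  have h := setIntegral_Iio_comp_affine hs (μ + ρ * u) c fun y ↦ stdPDF (condArg (y - μ) ρ u)
  simp only [condArg_sub, add_sub_cancel_right, mul_div_cancel_left₀ _ hs.ne'] at h
  simp only [integral_const_mul, condArg_sub, ← h, stdCDF]

lemma lowerQuadrantProb_eq {ρ : ℝ} (hρ : |ρ| < 1) (μ₁ μ₂ c₁ c₂ : ℝ) :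
    lowerQuadrantProb μ₁ μ₂ c₁ c₂ ρ =
      ∫ u in Iio (c₁ - μ₁), stdPDF u * stdCDF (condArg (c₂ - μ₂) ρ u) := by
  have hprod : {p : ℝ × ℝ | p.1 < c₁ ∧ p.2 < c₂} = Iio c₁ ×ˢ Iio c₂ := rfl
  have h := setIntegral_Iio_comp_affine one_pos μ₁ c₁
    fun x ↦ stdPDF (x - μ₁) * stdCDF (condArg (c₂ - μ₂) ρ (x - μ₁))
  simp only [div_one, one_mul, add_sub_cancel_right, inv_one] at h
  rw [lowerQuadrantProb, hprod, Measure.volume_eq_prod,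
    setIntegral_prod _ (integrable_bvnPDF hρ μ₁ μ₂).integrableOn, h]
  simp only [bvnPDF_eq_stdPDF_mul hρ, integral_const_mul, setIntegral_Iio_stdPDF_condArg hρ]

lemma hasDerivAt_condArg_rho {ρ : ℝ} (hρ : |ρ| < 1) (b u : ℝ) :
    HasDerivAt (fun r ↦ condArg b r u) ((ρ * b - u) / √(1 - ρ ^ 2) ^ 3) ρ := by
  have hq := one_sub_sq_pos hρ
  have hs : 0 < √(1 - ρ ^ 2) := sqrt_pos.2 hq
  have hsqrt := ((hasDerivAt_pow 2 ρ).const_sub 1).sqrt hq.ne'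
  have h := ((hasDerivAt_id' ρ).mul_const u |>.const_sub b).div hsqrt hs.ne'
  refine h.congr_deriv ?_
  rw [div_eq_div_iff (by positivity) (by positivity)]
  field_simp
  rw [sq_sqrt hq.le]
  ring

/-- Plackett's identity: this `u`-derivative is also the `ρ`-derivative of
`stdPDF u * stdCDF (condArg b ρ u)`. -/
lemma hasDerivAt_stdPDF_mul_stdPDF_condArg {ρ : ℝ} (hρ : |ρ| < 1) (b u : ℝ) :
    HasDerivAt (fun v ↦ (√(1 - ρ ^ 2))⁻¹ * (stdPDF v * stdPDF (condArg b ρ v)))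
      (stdPDF u * (stdPDF (condArg b ρ u) * ((ρ * b - u) / √(1 - ρ ^ 2) ^ 3))) u := by
  have hq := one_sub_sq_pos hρ
  have hcond : HasDerivAt (condArg b ρ) (-ρ / √(1 - ρ ^ 2)) u :=
    (((hasDerivAt_id' u).const_mul ρ).const_sub b).div_const _ |>.congr_deriv (by ring)
  have h := ((hasDerivAt_stdPDF u).mul
    ((hasDerivAt_stdPDF (condArg b ρ u)).comp u hcond)).const_mul (√(1 - ρ ^ 2))⁻¹
  refine h.congr_deriv ?_
  simp only [condArg, Function.comp_apply]
  field_simp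
  rw [sq_sqrt hq.le]
  ring

lemma abs_stdPDF_mul_stdPDF_condArg_mul_le {κ r : ℝ} (hκ : κ < 1) (hr : |r| ≤ κ) (b u : ℝ) :
    |stdPDF u * (stdPDF (condArg b r u) * ((r * b - u) / √(1 - r ^ 2) ^ 3))|
      ≤ (√(1 - κ ^ 2) ^ 3)⁻¹ * (|b| * stdPDF u + |u * stdPDF u|) := by
  have hr₁ : |r| < 1 := hr.trans_lt hκ
  have hκ₁ : |κ| < 1 := by rwa [abs_of_nonneg ((abs_nonneg r).trans hr)]
  have hsκ : 0 < √(1 - κ ^ 2) := sqrt_pos.2 (one_sub_sq_pos hκ₁)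
  have hsle : √(1 - κ ^ 2) ≤ √(1 - r ^ 2) :=
    sqrt_le_sqrt (by nlinarith [sq_abs r, abs_nonneg r])
  have hnum : |r * b - u| ≤ |b| + |u| := calc
    |r * b - u| ≤ |r| * |b| + |u| := (abs_sub _ _).trans_eq (by rw [abs_mul])
    _ ≤ |b| + |u| := by gcongr; exact mul_le_of_le_one_left (abs_nonneg b) hr₁.le
  rw [abs_mul, abs_mul, abs_div, abs_mul u, abs_of_pos (stdPDF_pos u),
    abs_of_pos (stdPDF_pos _), abs_of_pos (pow_pos (hsκ.trans_le hsle) 3)]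
  calc stdPDF u * (stdPDF (condArg b r u) * (|r * b - u| / √(1 - r ^ 2) ^ 3))
      ≤ stdPDF u * (1 * ((|b| + |u|) / √(1 - κ ^ 2) ^ 3)) := by
        gcongr
        · exact (stdPDF_pos u).le
        · exact stdPDF_le_one _
    _ = (√(1 - κ ^ 2) ^ 3)⁻¹ * (|b| * stdPDF u + |u| * stdPDF u) := by ring

lemma setIntegral_Iio_stdPDF_mul_stdPDF_condArg_mul {ρ : ℝ} (hρ : |ρ| < 1) (a b : ℝ) :
    ∫ u in Iio a, stdPDF u * (stdPDF (condArg b ρ u) * ((ρ * b - u) / √(1 - ρ ^ 2) ^ 3))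
      = (√(1 - ρ ^ 2))⁻¹ * (stdPDF a * stdPDF (condArg b ρ a)) := by
  have hint : Integrable fun u ↦
      stdPDF u * (stdPDF (condArg b ρ u) * ((ρ * b - u) / √(1 - ρ ^ 2) ^ 3)) :=
    (((integrable_stdPDF.const_mul _).add integrable_mul_stdPDF.abs).const_mul _).mono'
      (by unfold condArg; fun_prop)
      (ae_of_all _ fun u ↦ abs_stdPDF_mul_stdPDF_condArg_mul_le hρ le_rfl b u)
  have hlim : Tendsto (fun v ↦ (√(1 - ρ ^ 2))⁻¹ * (stdPDF v * stdPDF (condArg b ρ v)))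
      atBot (𝓝 0) := by
    have hle (v : ℝ) : (√(1 - ρ ^ 2))⁻¹ * (stdPDF v * stdPDF (condArg b ρ v))
        ≤ (√(1 - ρ ^ 2))⁻¹ * stdPDF v := by
      gcongr
      exact mul_le_of_le_one_right (stdPDF_pos v).le (stdPDF_le_one _)
    refine squeeze_zero (fun v ↦ ?_) hle (by simpa using tendsto_stdPDF_atBot.const_mul _)
    have := stdPDF_pos v
    have := stdPDF_pos (condArg b ρ v)
    positivity
  rw [← integral_Iic_eq_integral_Iio, integral_Iic_of_hasDerivAt_of_tendsto
    (hasDerivAt_stdPDF_mul_stdPDF_condArg hρ b a).continuousAt.continuousWithinAt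
    (fun u _ ↦ hasDerivAt_stdPDF_mul_stdPDF_condArg hρ b u) hint.integrableOn hlim, sub_zero]

lemma hasDerivAt_setIntegral_Iio_stdPDF_mul_stdCDF_condArg {ρ : ℝ} (hρ : |ρ| < 1) (a b : ℝ) :
    HasDerivAt (fun r ↦ ∫ u in Iio a, stdPDF u * stdCDF (condArg b r u))
      ((√(1 - ρ ^ 2))⁻¹ * (stdPDF a * stdPDF (condArg b ρ a))) ρ := by
  have hκ : (1 + |ρ|) / 2 < 1 := by linarith
  have hball : ∀ r ∈ Metric.ball ρ ((1 - |ρ|) / 2), |r| ≤ (1 + |ρ|) / 2 := fun r hr ↦ by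
    rw [Metric.mem_ball, dist_eq] at hr
    linarith [abs_sub_abs_le_abs_sub r ρ]
  have hF (r : ℝ) : Continuous fun u ↦ stdPDF u * stdCDF (condArg b r u) := by
    unfold condArg
    fun_prop
  obtain ⟨-, h⟩ := hasDerivAt_integral_of_dominated_loc_of_deriv_le
    (Metric.ball_mem_nhds ρ (by linarith))
    (Eventually.of_forall fun r ↦ (hF r).aestronglyMeasurable)
    (integrable_stdPDF.integrableOn.mono' (hF ρ).aestronglyMeasurable (ae_of_all _ fun u ↦ by
      rw [norm_mul, Real.norm_of_nonneg (stdPDF_pos u).le,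
        Real.norm_of_nonneg (stdCDF_nonneg _)]
      exact mul_le_of_le_one_right (stdPDF_pos u).le (stdCDF_le_one _)))
    (by unfold condArg; fun_prop)
    (ae_of_all _ fun u r hr ↦ abs_stdPDF_mul_stdPDF_condArg_mul_le hκ (hball r hr) b u)
    (((integrable_stdPDF.const_mul _).add integrable_mul_stdPDF.abs).const_mul _).integrableOn
    (ae_of_all _ fun u r hr ↦ ((hasDerivAt_stdCDF _).comp r
      (hasDerivAt_condArg_rho ((hball r hr).trans_lt hκ) b u)).const_mul (stdPDF u))
  rwa [setIntegral_Iio_stdPDF_mul_stdPDF_condArg_mul hρ] at h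

lemma hasDerivAt_lowerQuadrantProb {ρ : ℝ} (hρ : |ρ| < 1) (μ₁ μ₂ c₁ c₂ : ℝ) :
    HasDerivAt (lowerQuadrantProb μ₁ μ₂ c₁ c₂) (bvnPDF μ₁ μ₂ ρ c₁ c₂) ρ := by
  have hnear : ∀ᶠ r in 𝓝 ρ, |r| < 1 := (isOpen_lt continuous_abs continuous_const).mem_nhds hρ
  rw [bvnPDF_eq_stdPDF_mul hρ, mul_left_comm]
  exact (hasDerivAt_setIntegral_Iio_stdPDF_mul_stdCDF_condArg hρ _ _).congr_of_eventuallyEq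
    (hnear.mono fun r hr ↦ lowerQuadrantProb_eq hr μ₁ μ₂ c₁ c₂)

lemma lowerQuadrantProb_zero (μ₁ μ₂ c₁ c₂ : ℝ) :
    lowerQuadrantProb μ₁ μ₂ c₁ c₂ 0 = stdCDF (c₁ - μ₁) * stdCDF (c₂ - μ₂) := by
  simp [lowerQuadrantProb_eq, condArg, integral_mul_const, stdCDF]

lemma bvnPDF_uncorrelated (μ₁ μ₂ x y : ℝ) :
    bvnPDF μ₁ μ₂ 0 x y = stdPDF (x - μ₁) * stdPDF (y - μ₂) := by
  simp [bvnPDF_eq_stdPDF_mul, condArg]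

/-- The score `∂_ρ log bvnPDF`, in the centred coordinates `a = x - μ₁`, `b = y - μ₂`. -/
noncomputable def bvnScore (a b ρ : ℝ) : ℝ :=
  (a * b + ρ * (1 - a ^ 2 - b ^ 2) + ρ ^ 2 * a * b - ρ ^ 3) / (1 - ρ ^ 2) ^ 2

noncomputable def bvnScoreDeriv (a b ρ : ℝ) : ℝ :=
  ((1 - a ^ 2 - b ^ 2 + 2 * ρ * a * b - 3 * ρ ^ 2) * (1 - ρ ^ 2)
    + 4 * ρ * (a * b + ρ * (1 - a ^ 2 - b ^ 2) + ρ ^ 2 * a * b - ρ ^ 3)) / (1 - ρ ^ 2) ^ 3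

lemma hasDerivAt_bvnScore {ρ : ℝ} (hρ : 1 - ρ ^ 2 ≠ 0) (a b : ℝ) :
    HasDerivAt (bvnScore a b) (bvnScoreDeriv a b ρ) ρ := by
  have hnum : HasDerivAt (fun r ↦ a * b + r * (1 - a ^ 2 - b ^ 2) + r ^ 2 * a * b - r ^ 3)
      (1 - a ^ 2 - b ^ 2 + 2 * ρ * a * b - 3 * ρ ^ 2) ρ := by
    refine ((((hasDerivAt_id' ρ).mul_const _).const_add _).add
      (((hasDerivAt_pow 2 ρ).mul_const a).mul_const b)).sub (hasDerivAt_pow 3 ρ)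
      |>.congr_deriv ?_
    push_cast
    ring
  refine (hnum.div (((hasDerivAt_pow 2 ρ).const_sub 1).fun_pow 2) (pow_ne_zero 2 hρ)).congr_deriv
    ?_
  rw [bvnScoreDeriv]
  field_simp
  push_cast
  ring

lemma hasDerivAt_bvnPDF_rho {ρ : ℝ} (hρ : |ρ| < 1) (μ₁ μ₂ x y : ℝ) :
    HasDerivAt (fun r ↦ bvnPDF μ₁ μ₂ r x y)
      (bvnPDF μ₁ μ₂ ρ x y * bvnScore (x - μ₁) (y - μ₂) ρ) ρ := by
  have hq := one_sub_sq_pos hρ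
  have hq' := (hasDerivAt_pow 2 ρ).const_sub 1
  have hconst := ((hq'.sqrt hq.ne').const_mul (2 * π)).inv (by positivity)
  have hexp := ((((hasDerivAt_id' ρ).const_mul 2).mul_const (x - μ₁)).mul_const (y - μ₂)
    |>.const_sub ((x - μ₁) ^ 2) |>.add_const ((y - μ₂) ^ 2) |>.neg
    |>.div (hq'.const_mul 2) (by positivity)).exp
  refine (hconst.mul hexp).congr_deriv ?_
  simp only [bvnPDF, bvnScore, Pi.neg_apply, Pi.div_apply, Pi.inv_apply]
  field_simp
  rw [sq_sqrt hq.le]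
  push_cast
  ring

theorem statement9 (μ₁ μ₂ c₁ c₂ : ℝ) :
    (fun ρ : ℝ =>
        (∫ p in {p : ℝ × ℝ | p.1 < c₁ ∧ p.2 < c₂}, bvnPDF μ₁ μ₂ ρ p.1 p.2) -
          (stdCDF (c₁ - μ₁) * stdCDF (c₂ - μ₂)
            + stdPDF (c₁ - μ₁) * stdPDF (c₂ - μ₂) * ρ
            + 1 / 2 * (stdPDF (c₁ - μ₁) * (c₁ - μ₁)) * (stdPDF (c₂ - μ₂) * (c₂ - μ₂)) * ρ ^ 2
            + 1 / 6 * (stdPDF (c₁ - μ₁) * ((c₁ - μ₁) ^ 2 - 1))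
                * (stdPDF (c₂ - μ₂) * ((c₂ - μ₂) ^ 2 - 1)) * ρ ^ 3))
      =O[nhds (0 : ℝ)] fun ρ => ρ ^ 4 := by
  have hnear : ∀ᶠ ρ in 𝓝 (0 : ℝ), |ρ| < 1 :=
    (isOpen_lt continuous_abs continuous_const).mem_nhds (by simp)
  have hscore {ρ : ℝ} (hρ : |ρ| < 1) :=
    hasDerivAt_bvnScore (one_sub_sq_pos hρ).ne' (c₁ - μ₁) (c₂ - μ₂)
  have hdensity {ρ : ℝ} (hρ : |ρ| < 1) := hasDerivAt_bvnPDF_rho hρ μ₁ μ₂ c₁ c₂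
  have h₀ : |(0 : ℝ)| < 1 := by simp
  refine (isBigO_sub_taylor_three (f := lowerQuadrantProb μ₁ μ₂ c₁ c₂)
    (f₃ := fun ρ ↦ bvnPDF μ₁ μ₂ ρ c₁ c₂ *
      (bvnScore (c₁ - μ₁) (c₂ - μ₂) ρ ^ 2 + bvnScoreDeriv (c₁ - μ₁) (c₂ - μ₂) ρ))
    (hnear.mono fun ρ hρ ↦ hasDerivAt_lowerQuadrantProb hρ μ₁ μ₂ c₁ c₂)
    (hnear.mono fun ρ hρ ↦ hdensity hρ)
    (hnear.mono fun ρ hρ ↦ ((hdensity hρ).mul (hscore hρ)).congr_deriv (by ring))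
    ((hdensity h₀).differentiableAt.mul (((hscore h₀).differentiableAt.pow 2).add
      (by unfold bvnScoreDeriv; fun_prop (disch := norm_num))))).congr_left fun ρ ↦ ?_
  rw [lowerQuadrantProb_zero, lowerQuadrantProb]
  simp only [bvnPDF_uncorrelated, bvnScore, bvnScoreDeriv]
  ring
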